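/- Let $\xi^{(1)}, \xi^{(2)}, \xi^{(0)}, \alpha^{(1)}, \alpha^{(2)}$ be unit vectors in a 2-dimensional subspace of $\mathbb{R}^3$, with angles: $\xi^{(1)}\cdot\xi^{(0)} = \cos\psi$, $\xi^{(1)}\cdot\xi^{(2)} = \cos\alpha$, $\alpha^{(1)}\cdot\xi^{(1)} = 0$, $\alpha^{(2)}\cdot\xi^{(2)} = 0$, and orientations chosen so that $\alpha^{(2)}\cdot\xi^{(1)} = \sin\alpha$, $\alpha^{(1)}\cdot\xi^{(2)} = -\sin\alpha$, $\alpha^{(1)}\cdot\xi^{(0)} = -\sin\psi$, $\alpha^{(2)}\cdot\xi^{(0)} = \sin(\alpha-\psi)$, $\alpha^{(1)}\cdot\alpha^{(2)} = \cos\alpha$. Then the trilinear form satisfies $\mathcal{G}(\alpha^{(1)} \otimes \xi^{(1)}, \alpha^{(2)} \otimes \xi^{(2)}, \xi^{(0)} \otimes \xi^{(0)}) = (\lambda + 2\mu + \mathscr{B} + \tfrac{\mathscr{A}}{2})\cos^2\alpha - (\mu + \mathscr{B} + \tfrac{\mathscr{A}}{2})\sin^2\alpha$. -/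
import Mathlib


open Matrix

/-- The trilinear form `𝒢` evaluated on rank-one matrices `a⁽ʲ⁾ ⊗ b⁽ʲ⁾`. -/
noncomputable def trilinearG (A B C lam mu : ℝ) (a1 b1 a2 b2 a0 b0 : Fin 3 → ℝ) : ℝ :=
  B * ((a1 ⬝ᵥ b1) * (a2 ⬝ᵥ b0) * (a0 ⬝ᵥ b2) + (a2 ⬝ᵥ b2) * (a1 ⬝ᵥ b0) * (a0 ⬝ᵥ b1)
      + (a2 ⬝ᵥ b1) * (a1 ⬝ᵥ b2) * (a0 ⬝ᵥ b0))
  + A / 4 * ((a2 ⬝ᵥ b1) * (a1 ⬝ᵥ b0) * (a0 ⬝ᵥ b2) + (a1 ⬝ᵥ b2) * (a2 ⬝ᵥ b0) * (a0 ⬝ᵥ b1))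
  + (lam + B) * ((a1 ⬝ᵥ b1) * (a2 ⬝ᵥ a0) * (b2 ⬝ᵥ b0) + (a2 ⬝ᵥ b2) * (a1 ⬝ᵥ a0) * (b1 ⬝ᵥ b0)
      + (a1 ⬝ᵥ a2) * (b1 ⬝ᵥ b2) * (a0 ⬝ᵥ b0))
  + 2 * C * (a1 ⬝ᵥ b1) * (a2 ⬝ᵥ b2) * (a0 ⬝ᵥ b0)
  + (mu + A / 4) * ((a1 ⬝ᵥ a2) * (b1 ⬝ᵥ a0) * (b2 ⬝ᵥ b0) + (b1 ⬝ᵥ b2) * (a1 ⬝ᵥ a0) * (a2 ⬝ᵥ b0)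
      + (a2 ⬝ᵥ a1) * (b2 ⬝ᵥ a0) * (b1 ⬝ᵥ b0) + (a2 ⬝ᵥ a0) * (a1 ⬝ᵥ b0) * (b1 ⬝ᵥ b2)
      + (b1 ⬝ᵥ a2) * (b2 ⬝ᵥ b0) * (a1 ⬝ᵥ a0) + (b2 ⬝ᵥ a1) * (b1 ⬝ᵥ b0) * (a2 ⬝ᵥ a0))

theorem G_coplanar_polarization (A B C lam mu ψ α : ℝ)
    (ξ1 ξ2 ξ0 α1 α2 : Fin 3 → ℝ)
    (hξ1 : ξ1 ⬝ᵥ ξ1 = 1) (hξ2 : ξ2 ⬝ᵥ ξ2 = 1) (hξ0 : ξ0 ⬝ᵥ ξ0 = 1)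
    (hα1 : α1 ⬝ᵥ α1 = 1) (hα2 : α2 ⬝ᵥ α2 = 1)
    (h10 : ξ1 ⬝ᵥ ξ0 = Real.cos ψ) (h12 : ξ1 ⬝ᵥ ξ2 = Real.cos α)
    (h20 : ξ2 ⬝ᵥ ξ0 = Real.cos (α - ψ))
    (hperp1 : α1 ⬝ᵥ ξ1 = 0) (hperp2 : α2 ⬝ᵥ ξ2 = 0)
    (ha21 : α2 ⬝ᵥ ξ1 = Real.sin α) (ha12 : α1 ⬝ᵥ ξ2 = -Real.sin α)
    (ha10 : α1 ⬝ᵥ ξ0 = -Real.sin ψ) (ha20 : α2 ⬝ᵥ ξ0 = Real.sin (α - ψ))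
    (ha : α1 ⬝ᵥ α2 = Real.cos α) :
    trilinearG A B C lam mu α1 ξ1 α2 ξ2 ξ0 ξ0
      = (lam + 2 * mu + B + A / 2) * Real.cos α ^ 2
        - (mu + B + A / 2) * Real.sin α ^ 2 := by
  have c12 := (dotProduct_comm ξ2 α1).trans ha12
  have c21 := (dotProduct_comm ξ1 α2).trans ha21
  have c11 := (dotProduct_comm ξ1 α1).trans hperp1
  have c22 := (dotProduct_comm ξ2 α2).trans hperp2
  have c10 := (dotProduct_comm ξ0 α1).trans ha10
  have c20 := (dotProduct_comm ξ0 α2).trans ha20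
  have d10 := (dotProduct_comm ξ0 ξ1).trans h10
  have d20 := (dotProduct_comm ξ0 ξ2).trans h20
  have d12 := (dotProduct_comm ξ2 ξ1).trans h12
  have da := (dotProduct_comm α2 α1).trans ha
  unfold trilinearG
  simp only [hξ0, h10, h12, h20, hperp1, hperp2, ha21, ha12, ha10, ha20, ha,
    c12, c21, c11, c22, c10, c20, d10, d20, d12, da,
    Real.cos_sub, Real.sin_sub]
  have h := Real.sin_sq_add_cos_sq ψ
  linear_combination ((mu + A / 4) * (2 * Real.cos α ^ 2 - Real.sin α ^ 2)
    - A / 4 * Real.sin α ^ 2) * h
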